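/- Let n ≥ 3 and m ≥ 2 be integers. Then the set Z consisting of all pendant vertices of the jellyfish graph JFG(n, m) except the single pendant vertex v_{nm} (so |Z| = nm − 1) is not a doubly resolving set of JFG(n, m): the pair u = v_{nm} and v = n satisfies d(u, x) − d(u, y) = d(v, x) − d(v, y) for all x, y ∈ Z. -/

import Mathlib

open SimpleGraph

/-- Vertex type of the jellyfish graph `JFG(n, m)`: cycle vertices (left) and
pendant vertices (right, a cycle vertex together with a pendant index). -/
abbrev JVert (n m : ℕ) := (ZMod n) ⊕ ((ZMod n) × Fin m)

/-- The jellyfish graph `JFG(n, m)`: the cycle `C_n` together with `m` pendant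
vertices attached to each cycle vertex. -/
def jellyfish (n m : ℕ) : SimpleGraph (JVert n m) where
  Adj u v :=
    match u, v with
    | Sum.inl i, Sum.inl j => i ≠ j ∧ (i - j = 1 ∨ j - i = 1)
    | Sum.inl i, Sum.inr p => p.1 = i
    | Sum.inr p, Sum.inl i => p.1 = i
    | Sum.inr _, Sum.inr _ => False
  symm := by
    constructor
    rintro (i | p) (j | q) h
    · exact ⟨h.1.symm, h.2.symm⟩
    · exact h
    · exact h
    · exact h
  loopless := by
    constructor
    rintro (i | p) h
    · exact h.1 rfl
    · exact h


/-- Vertices `x, y` doubly resolve `u, v` if `d(u,x) - d(u,y) ≠ d(v,x) - d(v,y)`;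
`Z` is a doubly resolving set if every two distinct vertices are doubly resolved
by some two vertices of `Z`. -/
def IsDoublyResolving {V : Type*} (G : SimpleGraph V) (Z : Set V) : Prop :=
  ∀ u v : V, u ≠ v → ∃ x ∈ Z, ∃ y ∈ Z,
    (G.dist u x : ℤ) - (G.dist u y : ℤ) ≠ (G.dist v x : ℤ) - (G.dist v y : ℤ)

/-!
A pendant vertex `v` with unique neighbour `w` satisfies `d(v, x) = d(w, x) + 1` for every
`x ≠ v`, since every path leaving `v` passes through `w`. So `d(v_{nm}, ·) - d(n, ·)` is constant
on the remaining pendant vertices, and no two of them can doubly resolve `v_{nm}` and `n`.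
-/

theorem SimpleGraph.dist_eq_dist_add_one_of_adj_iff {V : Type*} {G : SimpleGraph V}
    {v w x : V} (hv : ∀ y, G.Adj v y ↔ y = w) (hwx : G.Reachable w x) (hxv : x ≠ v) :
    G.dist v x = G.dist w x + 1 := by
  have hvw : G.Adj v w := (hv w).mpr rfl
  apply le_antisymm
  · calc G.dist v x ≤ G.dist v w + G.dist w x := hvw.reachable.dist_triangle_left x
      _ = G.dist w x + 1 := by rw [dist_eq_one_iff_adj.mpr hvw, add_comm]
  · obtain ⟨p, hp⟩ := (hvw.reachable.trans hwx).exists_walk_length_eq_dist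
    cases p with
    | nil => exact absurd rfl hxv
    | cons hadj q =>
      obtain rfl := (hv _).mp hadj
      rw [← hp, Walk.length_cons]
      exact Nat.add_le_add_right (dist_le q) 1

theorem not_isDoublyResolving_of_forall_dist_sub_eq {V : Type*} {G : SimpleGraph V}
    {Z : Set V} {u v : V} (huv : u ≠ v)
    (h : ∀ x ∈ Z, ∀ y ∈ Z,
      (G.dist u x : ℤ) - (G.dist u y : ℤ) = (G.dist v x : ℤ) - (G.dist v y : ℤ)) :
    ¬ IsDoublyResolving G Z := fun hZ ↦
  let ⟨x, hx, y, hy, hne⟩ := hZ u v huv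
  hne (h x hx y hy)

namespace jellyfish

variable {n m : ℕ}

theorem reachable_inl_add_one (i : ZMod n) :
    (jellyfish n m).Reachable (Sum.inl i) (Sum.inl (i + 1)) := by
  by_cases h : i = i + 1
  · rw [← h]
  · exact Adj.reachable ⟨h, Or.inr (add_sub_cancel_left i 1)⟩

theorem reachable_inl (i j : ZMod n) : (jellyfish n m).Reachable (Sum.inl i) (Sum.inl j) := by
  suffices h : ∀ k : ℤ, (jellyfish n m).Reachable (Sum.inl i) (Sum.inl (i + k)) by
    obtain ⟨k, hk⟩ := ZMod.intCast_surjective (j - i)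
    simpa [hk] using h k
  intro k
  induction k using Int.induction_on with
  | zero => simp
  | succ k ih =>
    simpa [add_assoc] using ih.trans (reachable_inl_add_one _)
  | pred k ih =>
    have h := reachable_inl_add_one (m := m) (i + (-(k : ZMod n) - 1))
    rw [add_assoc, sub_add_cancel] at h
    push_cast at ih ⊢
    exact ih.trans h.symm

theorem connected (n m : ℕ) : (jellyfish n m).Connected := by
  have : Nonempty (JVert n m) := ⟨Sum.inl 0⟩
  refine Connected.mk fun x y ↦ ?_
  suffices h : ∀ x, (jellyfish n m).Reachable (Sum.inl 0) x from (h x).symm.trans (h y)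
  rintro (i | p)
  · exact reachable_inl 0 i
  · exact (reachable_inl 0 p.1).trans (Adj.reachable (show p.1 = p.1 from rfl))

theorem adj_inr_iff (p : ZMod n × Fin m) (y : JVert n m) :
    (jellyfish n m).Adj (Sum.inr p) y ↔ y = Sum.inl p.1 := by
  cases y <;> simp [jellyfish, eq_comm]

theorem dist_inr (p : ZMod n × Fin m) {x : JVert n m} (hx : x ≠ Sum.inr p) :
    (jellyfish n m).dist (Sum.inr p) x = (jellyfish n m).dist (Sum.inl p.1) x + 1 :=
  dist_eq_dist_add_one_of_adj_iff (adj_inr_iff p) ((connected n m).preconnected _ _) hx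

end jellyfish

theorem jellyfish_pendants_minus_last_not_doubly_resolving (n m : ℕ) (hm : 2 ≤ m) :
    ¬ IsDoublyResolving (jellyfish n m)
      (Set.range (Sum.inr : ZMod n × Fin m → JVert n m) \
        {Sum.inr ((n : ZMod n), (⟨m - 1, by omega⟩ : Fin m))}) ∧
    ∀ x ∈ Set.range (Sum.inr : ZMod n × Fin m → JVert n m) \
        {Sum.inr ((n : ZMod n), (⟨m - 1, by omega⟩ : Fin m))},
      ∀ y ∈ Set.range (Sum.inr : ZMod n × Fin m → JVert n m) \
        {Sum.inr ((n : ZMod n), (⟨m - 1, by omega⟩ : Fin m))},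
      ((jellyfish n m).dist (Sum.inr ((n : ZMod n), (⟨m - 1, by omega⟩ : Fin m))) x : ℤ) -
          ((jellyfish n m).dist (Sum.inr ((n : ZMod n), (⟨m - 1, by omega⟩ : Fin m))) y : ℤ) =
        ((jellyfish n m).dist (Sum.inl (n : ZMod n)) x : ℤ) -
          ((jellyfish n m).dist (Sum.inl (n : ZMod n)) y : ℤ) := by
  set p : ZMod n × Fin m := ((n : ZMod n), ⟨m - 1, by omega⟩)
  have hsub : ∀ x ∈ Set.range Sum.inr \ {Sum.inr p}, ∀ y ∈ Set.range Sum.inr \ {Sum.inr p},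
      ((jellyfish n m).dist (Sum.inr p) x : ℤ) - (jellyfish n m).dist (Sum.inr p) y =
        ((jellyfish n m).dist (Sum.inl p.1) x : ℤ) - (jellyfish n m).dist (Sum.inl p.1) y := by
    rintro x ⟨-, hx⟩ y ⟨-, hy⟩
    rw [jellyfish.dist_inr p hx, jellyfish.dist_inr p hy]
    push_cast
    ring
  exact ⟨not_isDoublyResolving_of_forall_dist_sub_eq Sum.inr_ne_inl hsub, hsub⟩
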